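/- arXiv:math/0203014 — 2 statements merged into one kernel-verified Lean document; each statement's English description precedes it below -/
import Mathlib

section
/- Let G be a group acting by isometries on a 1-hyperbolic geodesic metric space (X,d) with base point x ∈ X, let M = (g_1, …, g_n) ∈ Gⁿ be a minimal n-tuple with |g_i|_x ≤ |g_n|_x for 1 ≤ i ≤ n−1, let H = ⟨g_1, …, g_{n−1}⟩, and suppose d_2 ≥ 0 is a constant such that every geodesic segment [x, hx] with h ∈ H is contained in the a-neighborhood of the orbit Hx, where a = max_{1≤i≤n−1}(|g_i|_x/2 + d_2). Then for every h ∈ H and ε ∈ {−1,1} there exists a point r ∈ X and geodesic segments such that the path w = [x,r] ∪ [r, hg_n^ε x] has length at most |hg_n^ε|_x + 2 and lies in the 2-neighborhood of any geodesic segment [x, hg_n^ε x], the segment [x,r] lies in the 2-neighborhood of [x, hx], the segment [r, hg_n^ε x] lies in the 2-neighborhood of h[x, g_n^ε x], and d(r, x) ≥ |h|_x/2 − 3 and d(r, hg_n^ε x) ≥ |g_n|_x/2 − (3 + d_2). -/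
set_option linter.unusedVariables false

/-- A geodesic segment from `a` to `b`: the image of an isometric
parameterization of the interval `[0, dist a b]`. -/
def IsGeodesicSegment {X : Type*} [MetricSpace X] (s : Set X) (a b : X) : Prop :=
  ∃ f : ℝ → X, f 0 = a ∧ f (dist a b) = b ∧
    (∀ t₁ ∈ Set.Icc (0 : ℝ) (dist a b), ∀ t₂ ∈ Set.Icc (0 : ℝ) (dist a b),
      dist (f t₁) (f t₂) = |t₁ - t₂|) ∧
    s = f '' Set.Icc (0 : ℝ) (dist a b)

/-- A geodesic metric space: any two points are joined by a geodesic segment. -/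
def GeodesicSpace (X : Type*) [MetricSpace X] : Prop :=
  ∀ a b : X, ∃ s : Set X, IsGeodesicSegment s a b

/-- `A` is contained in the `r`-neighborhood of `B`. -/
def InNbhd {X : Type*} [MetricSpace X] (A B : Set X) (r : ℝ) : Prop :=
  ∀ p ∈ A, ∃ q ∈ B, dist p q ≤ r

/-- `δ`-hyperbolicity: every geodesic triangle is `δ`-thin, i.e. each side is
contained in the `δ`-neighborhood of the union of the other two sides. -/
def DeltaHyperbolic (X : Type*) [MetricSpace X] (δ : ℝ) : Prop :=
  ∀ a b c : X, ∀ sab sac sbc : Set X,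
    IsGeodesicSegment sab a b → IsGeodesicSegment sac a c → IsGeodesicSegment sbc b c →
    InNbhd sab (sac ∪ sbc) δ

/-- Elementary Nielsen moves on an `n`-tuple of elements of a group. -/
inductive NielsenMove {G : Type*} [Group G] {n : ℕ} : (Fin n → G) → (Fin n → G) → Prop
  | inv (g : Fin n → G) (i : Fin n) : NielsenMove g (Function.update g i (g i)⁻¹)
  | mul (g : Fin n → G) (i j : Fin n) (hij : i ≠ j) :
      NielsenMove g (Function.update g i (g i * g j))
  | swap (g : Fin n → G) (i j : Fin n) (hij : i ≠ j) :
      NielsenMove g (g ∘ Equiv.swap i j)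

/-- Nielsen equivalence: a finite chain of elementary Nielsen moves. -/
def NielsenEquiv {G : Type*} [Group G] {n : ℕ} (M M' : Fin n → G) : Prop :=
  Relation.ReflTransGen NielsenMove M M'

/-- The word metric on the free group `F(x_1, …, x_n)`:
the length of the reduced word representing `w⁻¹ * v`. -/
noncomputable def freeDist {n : ℕ} (w v : FreeGroup (Fin n)) : ℝ :=
  ((w⁻¹ * v).toWord.length : ℝ)

/-- The orbit map (on the subgroup generated by the tuple `g`, identified with
a quotient of the free group via `FreeGroup.lift g`) is a quasi-isometric embedding
with respect to the word metric of the basis `g`. -/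
def OrbitQIEmbed {G X : Type*} [Group G] [MetricSpace X] [MulAction G X]
    {n : ℕ} (x : X) (g : Fin n → G) : Prop :=
  ∃ lam eps : ℝ, 1 ≤ lam ∧ 0 ≤ eps ∧ ∀ w v : FreeGroup (Fin n),
    lam⁻¹ * freeDist w v - eps ≤ dist ((FreeGroup.lift g w) • x) ((FreeGroup.lift g v) • x) ∧
    dist ((FreeGroup.lift g w) • x) ((FreeGroup.lift g v) • x) ≤ lam * freeDist w v + eps

/-- The sum of the displacements `|g_i|_x` of the members of a tuple. -/
noncomputable def tupleLen {G X : Type*} [Group G] [MetricSpace X] [MulAction G X]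
    {n : ℕ} (x : X) (M : Fin n → G) : ℝ :=
  ∑ i, dist x (M i • x)

/-- A minimal tuple: `|M|_x ≤ |M'|_x + 1` for every Nielsen-equivalent tuple `M'`. -/
def MinimalTuple {G X : Type*} [Group G] [MetricSpace X] [MulAction G X]
    {n : ℕ} (x : X) (M : Fin n → G) : Prop :=
  ∀ M' : Fin n → G, NielsenEquiv M M' → tupleLen x M ≤ tupleLen x M' + 1

/-- A freely reduced word in letters `(i, ±1)`: no letter is followed by its inverse. -/
def ReducedWord {n : ℕ} (l : List (Fin n × Bool)) : Prop :=
  l.Chain' fun a b => a.1 = b.1 → a.2 = b.2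

/-- The element of `G` represented by a word in the tuple `g` and its inverses. -/
def wordProd {G : Type*} [Group G] {n : ℕ} (g : Fin n → G) (l : List (Fin n × Bool)) : G :=
  (l.map fun p => if p.2 then g p.1 else (g p.1)⁻¹).prod

/-- Conclusion (2): for freely reduced `u = g_{i_1}^{ε_1} ⋯ g_{i_k}^{ε_k}`, any geodesic
`[x, ux]` lies in the `d`-neighborhood of the broken path
`[x, g_{i_1}^{ε_1} x] ∪ ⋯ ∪ g_{i_1}^{ε_1} ⋯ g_{i_{k-1}}^{ε_{k-1}} [x, g_{i_k}^{ε_k} x]`. -/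
def BrokenPathNbhd {G X : Type*} [Group G] [MetricSpace X] [MulAction G X]
    {n : ℕ} (x : X) (g : Fin n → G) (d : ℝ) : Prop :=
  ∀ l : List (Fin n × Bool), l ≠ [] → ReducedWord l →
    ∀ S : Set X, IsGeodesicSegment S x (wordProd g l • x) →
    ∀ seg : ℕ → Set X,
      (∀ j < l.length, IsGeodesicSegment (seg j)
        (wordProd g (l.take j) • x) (wordProd g (l.take (j + 1)) • x)) →
      ∀ p ∈ S, ∃ j < l.length, ∃ q ∈ seg j, dist p q ≤ d

/-- For freely reduced `u`, any geodesic `[x, ux]` lies in the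
`max_i (|g_i|_x/2 + d)`-neighborhood of the orbit `Ux`. -/
def SegInOrbitNbhd {G X : Type*} [Group G] [MetricSpace X] [MulAction G X]
    {n : ℕ} (x : X) (g : Fin n → G) (d : ℝ) : Prop :=
  ∀ l : List (Fin n × Bool), l ≠ [] → ReducedWord l →
    ∀ S : Set X, IsGeodesicSegment S x (wordProd g l • x) →
    ∀ p ∈ S, ∃ (w : FreeGroup (Fin n)) (i : Fin n),
      dist p ((FreeGroup.lift g w) • x) ≤ dist x (g i • x) / 2 + d

/-- Conclusion (3): for freely reduced `u = g_{i_1}^{ε_1} ⋯ g_{i_k}^{ε_k}` one has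
`|u|_x ≥ |g_{i_j}|_x - d` for every letter occurring in `u`. -/
def LetterBound {G X : Type*} [Group G] [MetricSpace X] [MulAction G X]
    {n : ℕ} (x : X) (g : Fin n → G) (d : ℝ) : Prop :=
  ∀ l : List (Fin n × Bool), ReducedWord l → ∀ j : Fin l.length,
    dist x (g (l.get j).1 • x) - d ≤ dist x (wordProd g l • x)

/-- Conclusion (4): every subsegment of a geodesic `[x, ux]`, `u ∈ U`, of length
greater than `d₄` meets the `max_i (|g_i|_x/2 - c)`-neighborhood of the orbit `Ux`. -/
def SubsegMeetsOrbit {G X : Type*} [Group G] [MetricSpace X] [MulAction G X]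
    {n : ℕ} (x : X) (g : Fin n → G) (d₄ c : ℝ) : Prop :=
  ∀ w : FreeGroup (Fin n), ∀ S : Set X, IsGeodesicSegment S x ((FreeGroup.lift g w) • x) →
    ∀ a ∈ S, ∀ b ∈ S, ∀ τ : Set X, IsGeodesicSegment τ a b → τ ⊆ S → d₄ < dist a b →
    ∃ p ∈ τ, ∃ (v : FreeGroup (Fin n)) (i : Fin n),
      dist p ((FreeGroup.lift g v) • x) ≤ dist x (g i • x) / 2 - c

/-- The dichotomy of Theorem 11 for an `(m+1)`-tuple `f` at base point `x`, with
constants `d₁, d₂, d₃, d₄` and parameter `c`. -/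
def Thm11Alt {G X : Type*} [Group G] [MetricSpace X] [MulAction G X]
    {m : ℕ} (x : X) (f : Fin (m + 1) → G) (d₁ d₂ d₃ d₄ c : ℝ) : Prop :=
  (∃ f' : Fin (m + 1) → G, NielsenEquiv f f' ∧ (⨅ y : X, dist y (f' 0 • y)) ≤ d₁) ∨
  (Function.Injective ⇑(FreeGroup.lift f) ∧ OrbitQIEmbed x f ∧ BrokenPathNbhd x f d₂ ∧
    SegInOrbitNbhd x f d₂ ∧ LetterBound x f d₃ ∧ SubsegMeetsOrbit x f d₄ c)

/-- A naturally parameterized `(λ, ε)`-quasigeodesic on the set `I ⊆ ℝ`. -/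
def IsQuasigeodesicOn {X : Type*} [MetricSpace X] (α : ℝ → X) (I : Set ℝ)
    (lam eps : ℝ) : Prop :=
  (∀ s ∈ I, ∀ t ∈ I, dist (α s) (α t) ≤ |s - t|) ∧
  (∀ s ∈ I, ∀ t ∈ I, |s - t| ≤ lam * dist (α s) (α t) + eps)

/-- A naturally parameterized `T`-local `(λ, ε)`-quasigeodesic on the set `I ⊆ ℝ`. -/
def IsLocalQuasigeodesicOn {X : Type*} [MetricSpace X] (α : ℝ → X) (I : Set ℝ)
    (T lam eps : ℝ) : Prop :=
  (∀ s ∈ I, ∀ t ∈ I, dist (α s) (α t) ≤ |s - t|) ∧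
  (∀ s ∈ I, ∀ t ∈ I, |s - t| ≤ T → |s - t| ≤ lam * dist (α s) (α t) + eps)

/-- The data provided by Lemma 15 for the pair `(g, h)`: a point `r` together with
geodesic segments `[x,r]`, `[r,gx]`, `[r,ghx]` such that the broken paths
`w_g = [x,r] ∪ [r,gx]`, `w_h = [gx,r] ∪ [r,ghx]`, `w_{gh} = [x,r] ∪ [r,ghx]` have
lengths at most `|g|_x + 2`, `|h|_x + 2`, `|gh|_x + 2` respectively and each lies in
the `2`-neighborhood of any geodesic segment joining its endpoints. -/
def Lemma15Data {G X : Type*} [Group G] [MetricSpace X] [MulAction G X]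
    (x : X) (g h : G) (r : X) (sxr srg srgh : Set X) : Prop :=
  IsGeodesicSegment sxr x r ∧ IsGeodesicSegment srg r (g • x) ∧
  IsGeodesicSegment srgh r ((g * h) • x) ∧
  dist x r + dist r (g • x) ≤ dist x (g • x) + 2 ∧
  dist (g • x) r + dist r ((g * h) • x) ≤ dist x (h • x) + 2 ∧
  dist x r + dist r ((g * h) • x) ≤ dist x ((g * h) • x) + 2 ∧
  (∀ S : Set X, IsGeodesicSegment S x (g • x) → InNbhd (sxr ∪ srg) S 2) ∧
  (∀ S : Set X, IsGeodesicSegment S (g • x) ((g * h) • x) → InNbhd (srg ∪ srgh) S 2) ∧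
  (∀ S : Set X, IsGeodesicSegment S x ((g * h) • x) → InNbhd (sxr ∪ srgh) S 2)

/-- Conclusion (4) of Proposition 13, for products
`w = h₁ gₙ^{ε₁} h₂ gₙ^{ε₂} ⋯ hₗ gₙ^{εₗ} h_{l+1}` with `hᵢ ∈ H`. -/
def Prop13Four {G X : Type*} [Group G] [MetricSpace X] [MulAction G X]
    (x : X) (H : Subgroup G) (gn : G) (T L : ℝ) : Prop :=
  ∀ l : ℕ, 1 ≤ l → ∀ (h : ℕ → G) (e : ℕ → ℤ),
    (∀ i ≤ l, h i ∈ H) →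
    (∀ i < l, e i = 1 ∨ e i = -1) →
    (∀ i, 1 ≤ i → i < l → e (i - 1) = -(e i) → h i ≠ 1) →
    ∀ A : ℕ → G, A 0 = 1 → (∀ i < l, A (i + 1) = A i * h i * gn ^ (e i)) →
    ∀ S : Set X, IsGeodesicSegment S x ((A l * h l) • x) →
    ∀ a ∈ S, ∀ b ∈ S, ∀ I : Set X, IsGeodesicSegment I a b → I ⊆ S → 10 * T ≤ dist a b →
    ∃ u v : G,
      ((∃ j < l, u = A j * h j ∧ v = A j * h j * gn ^ (e j)) ∨
        (∃ j ≤ l, u = A j ∧ v = A j * h j)) ∧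
      ∃ Seg : Set X, IsGeodesicSegment Seg (u • x) (v • x) ∧
        ∃ a' ∈ Seg, ∃ b' ∈ Seg, ∃ τ : Set X, IsGeodesicSegment τ a' b' ∧ τ ⊆ Seg ∧
          T ≤ dist a' b' ∧ InNbhd τ I (2 * L + 100)

/-! The point `r` is taken on a geodesic `[x, hx]`: it is the first point of that segment that
is `1`-close to every geodesic `[hx, y]`, `y = hgₙ^ε x`; thinness of the triangle `x, hx, y`
makes it `1`-close to every `[x, y]` as well, and all the neighbourhood and length statements
follow from thinness again. The two lower bounds come from minimality: for `u ∈ H` the tuple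
obtained by replacing `gₙ` with `u gₙ^ε` is Nielsen-equivalent to `M`, so
`|gₙ|_x ≤ |u gₙ^ε|_x + 1`. With `u = h` this says that `r`, which lies near `[hx, y]`, cannot be
close to `x` unless `|h|_x` is small; with `u = h'⁻¹ h`, where `h'x` is a point of `Hx` near `r`,
it says that `r` is far from `y`. -/

open Metric Set Function

namespace IsGeodesicSegment

variable {X : Type*} [MetricSpace X] {s : Set X} {a b c : X}

lemma left_mem (hs : IsGeodesicSegment s a b) : a ∈ s := by
  obtain ⟨f, hf0, -, -, rfl⟩ := hs
  exact ⟨0, ⟨le_rfl, dist_nonneg⟩, hf0⟩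

lemma right_mem (hs : IsGeodesicSegment s a b) : b ∈ s := by
  obtain ⟨f, -, hfL, -, rfl⟩ := hs
  exact ⟨dist a b, ⟨dist_nonneg, le_rfl⟩, hfL⟩

lemma singleton (a : X) : IsGeodesicSegment {a} a a :=
  ⟨fun _ => a, rfl, rfl, fun t₁ ht₁ t₂ ht₂ => by
    simp only [dist_self, Icc_self, mem_singleton_iff] at ht₁ ht₂ ⊢
    simp [ht₁, ht₂], by simp⟩

lemma symm (hs : IsGeodesicSegment s a b) : IsGeodesicSegment s b a := by
  obtain ⟨f, hf0, hfL, hfiso, rfl⟩ := hs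
  unfold IsGeodesicSegment
  rw [dist_comm b a]
  refine ⟨fun t => f (dist a b - t), by simpa using hfL, by simpa using hf0, ?_, ?_⟩
  · intro t₁ ht₁ t₂ ht₂
    rw [hfiso _ ⟨by linarith [ht₁.2], by linarith [ht₁.1]⟩ _
      ⟨by linarith [ht₂.2], by linarith [ht₂.1]⟩, ← abs_neg]
    ring_nf
  · rw [← image_image f (dist a b - ·), image_const_sub_Icc, sub_self, sub_zero]

lemma dist_add_dist_eq (hs : IsGeodesicSegment s a b) (hc : c ∈ s) :
    dist a c + dist c b = dist a b := by
  obtain ⟨f, hf0, hfL, hfiso, rfl⟩ := hs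
  obtain ⟨t, ht, rfl⟩ := hc
  have hat := hfiso 0 ⟨le_rfl, dist_nonneg⟩ t ht
  have htb := hfiso t ht _ ⟨dist_nonneg, le_rfl⟩
  rw [hf0] at hat
  rw [hfL] at htb
  rw [hat, htb, abs_of_nonpos (by linarith [ht.1]), abs_of_nonpos (by linarith [ht.2])]
  ring

lemma dist_add_dist_le_of_dist_le {p : X} {k : ℝ} (hs : IsGeodesicSegment s a b) (hc : c ∈ s)
    (hpc : dist p c ≤ k) : dist a p + dist p b ≤ dist a b + 2 * k := by
  linarith [hs.dist_add_dist_eq hc, dist_triangle a c p, dist_triangle p c b, dist_comm c p]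

lemma exists_subset_isGeodesicSegment_left (hs : IsGeodesicSegment s a b) (hc : c ∈ s) :
    ∃ t ⊆ s, IsGeodesicSegment t a c := by
  obtain ⟨f, hf0, -, hfiso, rfl⟩ := hs
  obtain ⟨u, hu, rfl⟩ := hc
  have hau : dist a (f u) = u := by
    rw [← hf0, hfiso 0 ⟨le_rfl, dist_nonneg⟩ u hu, zero_sub, abs_neg, abs_of_nonneg hu.1]
  have hsub : Icc 0 u ⊆ Icc 0 (dist a b) := Icc_subset_Icc_right hu.2
  refine ⟨f '' Icc 0 u, image_mono hsub, f, hf0, ?_, ?_, ?_⟩ <;> rw [hau]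
  exact fun t₁ ht₁ t₂ ht₂ => hfiso t₁ (hsub ht₁) t₂ (hsub ht₂)

lemma isCompact (hs : IsGeodesicSegment s a b) : IsCompact s := by
  obtain ⟨f, -, -, hfiso, rfl⟩ := hs
  have hlip : LipschitzOnWith 1 f (Icc 0 (dist a b)) :=
    LipschitzOnWith.of_dist_le_mul fun s hs t ht => by simp [hfiso s hs t ht, Real.dist_eq]
  exact isCompact_Icc.image_of_continuousOn hlip.continuousOn

lemma exists_dist_le_of_infDist_le {p : X} {k : ℝ} (hs : IsGeodesicSegment s a b)
    (hp : infDist p s ≤ k) : ∃ q ∈ s, dist p q ≤ k := by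
  obtain ⟨q, hq, hpq⟩ := hs.isCompact.exists_infDist_eq_dist ⟨a, hs.left_mem⟩ p
  exact ⟨q, hq, hpq ▸ hp⟩

end IsGeodesicSegment

lemma InNbhd.union {X : Type*} [MetricSpace X] {A₁ A₂ B : Set X} {k : ℝ}
    (h₁ : InNbhd A₁ B k) (h₂ : InNbhd A₂ B k) : InNbhd (A₁ ∪ A₂) B k := by
  rintro p (hp | hp)
  exacts [h₁ p hp, h₂ p hp]

lemma Metric.infDist_le_of_forall_pos_exists_near {X : Type*} [MetricSpace X] {p : X}
    {s : Set X} {k : ℝ} (h : ∀ ε > 0, ∃ q, dist p q ≤ ε ∧ infDist q s ≤ k) :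
    infDist p s ≤ k := by
  refine le_of_forall_pos_le_add fun ε hε => ?_
  obtain ⟨q, hpq, hq⟩ := h ε hε
  linarith [infDist_le_infDist_add_dist (x := p) (y := q) (s := s)]

namespace DeltaHyperbolic

variable {X : Type*} [MetricSpace X] {δ : ℝ}

lemma inNbhd_of_same_endpoints (hhyp : DeltaHyperbolic X δ) {S S' : Set X} {a b : X}
    (hS : IsGeodesicSegment S a b) (hS' : IsGeodesicSegment S' a b) : InNbhd S S' δ := by
  intro p hp
  obtain ⟨q, hq | rfl, hpq⟩ := hhyp a b b S S' {b} hS hS' (.singleton b) p hp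
  exacts [⟨q, hq, hpq⟩, ⟨_, hS'.right_mem, hpq⟩]

lemma inNbhd_of_dist_le (hgeo : GeodesicSpace X) (hhyp : DeltaHyperbolic X δ)
    {s S : Set X} {a r w c : X} {k : ℝ} (hs : IsGeodesicSegment s a r)
    (hS : IsGeodesicSegment S a w) (hc : c ∈ S) (hrc : dist r c ≤ k) :
    InNbhd s S (δ + k) := by
  obtain ⟨t, htS, ht⟩ := hS.exists_subset_isGeodesicSegment_left hc
  obtain ⟨γ, hγ⟩ := hgeo r c
  intro p hp
  obtain ⟨q, hq | hq, hpq⟩ := hhyp a r c s t γ hs ht hγ p hp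
  · exact ⟨q, htS hq, by linarith [dist_nonneg.trans hrc]⟩
  · refine ⟨c, hc, ?_⟩
    linarith [dist_triangle p q c, hγ.dist_add_dist_eq hq, dist_nonneg (x := r) (y := q)]

theorem exists_mem_near_other_sides (hδ : 0 ≤ δ) (hhyp : DeltaHyperbolic X δ)
    {S : Set X} {x z : X} (hS : IsGeodesicSegment S x z) (y : X) :
    ∃ r ∈ S, (∀ T, IsGeodesicSegment T x y → ∃ q ∈ T, dist r q ≤ δ) ∧
      (∀ T, IsGeodesicSegment T z y → ∃ q ∈ T, dist r q ≤ δ) := by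
  obtain ⟨f, hf0, hfL, hfiso, rfl⟩ := id hS
  set A := dist x z
  set W := {u ∈ Icc 0 A | ∀ T, IsGeodesicSegment T z y → infDist (f u) T ≤ δ}
  have hAW : A ∈ W := ⟨⟨dist_nonneg, le_rfl⟩, fun T hT => by
    rw [hfL, infDist_zero_of_mem hT.left_mem]; exact hδ⟩
  have hWbdd : BddBelow W := ⟨0, fun u hu => hu.1.1⟩
  set P := sInf W
  have hP : P ∈ Icc 0 A := ⟨le_csInf ⟨A, hAW⟩ fun u hu => hu.1.1, csInf_le hWbdd hAW⟩
  have hnear_xy : ∀ T, IsGeodesicSegment T x y → infDist (f P) T ≤ δ := by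
    intro T hT
    -- a parameter `u < P` is not in `W`, so thinness puts `f u` close to `T`
    have hbelow : ∀ u ∈ Icc 0 A, u < P → infDist (f u) T ≤ δ := by
      intro u hu huP
      by_contra! hfar
      refine huP.not_ge (csInf_le hWbdd ⟨hu, fun T' hT' => ?_⟩)
      obtain ⟨q, hq | hq, hpq⟩ := hhyp x z y _ T T' hS hT hT' (f u) (mem_image_of_mem f hu)
      · exact absurd ((infDist_le_dist_of_mem hq).trans hpq) hfar.not_ge
      · exact (infDist_le_dist_of_mem hq).trans hpq
    rcases hP.1.eq_or_lt with hP0 | hP0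
    · rw [← hP0, hf0, infDist_zero_of_mem hT.left_mem]; exact hδ
    refine infDist_le_of_forall_pos_exists_near fun ε hε => ?_
    have hpos : 0 < min ε P := lt_min hε hP0
    have hu : P - min ε P ∈ Icc 0 A :=
      ⟨by linarith [min_le_right ε P], by linarith [hP.2]⟩
    refine ⟨f (P - min ε P), ?_, hbelow _ hu (by linarith)⟩
    rw [hfiso P hP _ hu, abs_of_nonneg (by linarith)]
    linarith [min_le_left ε P]
  have hnear_zy : ∀ T, IsGeodesicSegment T z y → infDist (f P) T ≤ δ := by
    intro T hT
    refine infDist_le_of_forall_pos_exists_near fun ε hε => ?_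
    obtain ⟨u, huW, hu⟩ := Real.lt_sInf_add_pos ⟨A, hAW⟩ hε
    refine ⟨f u, ?_, huW.2 T hT⟩
    rw [hfiso P hP u huW.1, abs_of_nonpos (by linarith [csInf_le hWbdd huW])]
    linarith
  exact ⟨f P, mem_image_of_mem f hP,
    fun T hT => hT.exists_dist_le_of_infDist_le (hnear_xy T hT),
    fun T hT => hT.exists_dist_le_of_infDist_le (hnear_zy T hT)⟩

end DeltaHyperbolic

namespace NielsenEquiv

variable {G : Type*} [Group G] {n : ℕ} {N : Fin n → G} {i j : Fin n}

lemma update_inv (N : Fin n → G) (i : Fin n) : NielsenEquiv N (update N i (N i)⁻¹) :=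
  .single (.inv N i)

lemma update_mul_right (hij : i ≠ j) : NielsenEquiv N (update N i (N i * N j)) :=
  .single (.mul N i j hij)

lemma update_mul_inv_right (hij : i ≠ j) : NielsenEquiv N (update N i (N i * (N j)⁻¹)) := by
  have h₁ := update_inv N j
  have h₂ := update_mul_right (N := update N j (N j)⁻¹) hij
  have h₃ := update_inv (update (update N j (N j)⁻¹) i (N i * (N j)⁻¹)) j
  simp only [update_self, update_of_ne hij, update_of_ne hij.symm, inv_inv] at h₂ h₃
  rw [update_comm hij, update_idem, update_eq_self] at h₃
  exact h₁.trans (h₂.trans h₃)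

lemma update_inv_mul_left (hij : i ≠ j) : NielsenEquiv N (update N i ((N j)⁻¹ * N i)) := by
  have h₁ := update_inv N i
  have h₂ := update_mul_right (N := update N i (N i)⁻¹) hij
  have h₃ := update_inv (update N i ((N i)⁻¹ * N j)) i
  simp only [update_self, update_of_ne hij.symm, update_idem, mul_inv_rev, inv_inv] at h₂ h₃
  exact h₁.trans (h₂.trans h₃)

lemma update_mul_left (hij : i ≠ j) : NielsenEquiv N (update N i (N j * N i)) := by
  have h₁ := update_inv N i
  have h₂ := update_mul_inv_right (N := update N i (N i)⁻¹) hij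
  have h₃ := update_inv (update N i ((N i)⁻¹ * (N j)⁻¹)) i
  simp only [update_self, update_of_ne hij.symm, update_idem, mul_inv_rev, inv_inv] at h₂ h₃
  exact h₁.trans (h₂.trans h₃)

lemma update_mul_left_of_mem_closure {u : G} (hu : u ∈ Subgroup.closure (N '' {i}ᶜ))
    (w : G) : NielsenEquiv (update N i w) (update N i (u * w)) := by
  induction hu using Subgroup.closure_induction'' generalizing w with
  | mem _ hg =>
    obtain ⟨j, hji, rfl⟩ := hg
    simpa [update_of_ne hji] using update_mul_left (N := update N i w) (Ne.symm hji)
  | inv_mem _ hg =>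
    obtain ⟨j, hji, rfl⟩ := hg
    simpa [update_of_ne hji] using update_inv_mul_left (N := update N i w) (Ne.symm hji)
  | one => rw [one_mul]; exact .refl
  | mul u v _ _ hu hv => rw [mul_assoc]; exact (hv w).trans (hu (v * w))

end NielsenEquiv

section Minimal

variable {G X : Type*} [Group G] [MetricSpace X] [MulAction G X] {x : X}

lemma MinimalTuple.dist_le_of_nielsenEquiv_update {n : ℕ} {N : Fin n → G}
    (hmin : MinimalTuple x N) (i : Fin n) {v : G} (hv : NielsenEquiv N (update N i v)) :
    dist x (N i • x) ≤ dist x (v • x) + 1 := by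
  have h := hmin _ hv
  simp only [tupleLen, apply_update (fun _ g => dist x (g • x)),
    Finset.sum_update_of_mem (Finset.mem_univ i)] at h
  rw [Finset.sum_eq_add_sum_sdiff_singleton_of_mem (Finset.mem_univ i)] at h
  linarith

lemma MinimalTuple.dist_last_le {m : ℕ} {M : Fin (m + 1) → G} (hmin : MinimalTuple x M) {u : G}
    (hu : u ∈ Subgroup.closure (Set.range fun i : Fin m => M i.castSucc)) {e : ℤ}
    (he : e = 1 ∨ e = -1) :
    dist x (M (Fin.last m) • x) ≤ dist x ((u * M (Fin.last m) ^ e) • x) + 1 := by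
  refine hmin.dist_le_of_nielsenEquiv_update _ ?_
  have hgen : Set.range (fun i : Fin m => M i.castSucc) ⊆ M '' {Fin.last m}ᶜ := by
    rintro _ ⟨i, rfl⟩
    exact ⟨i.castSucc, (Fin.castSucc_lt_last i).ne, rfl⟩
  have hpow : NielsenEquiv M (update M (Fin.last m) (M (Fin.last m) ^ e)) := by
    rcases he with rfl | rfl
    · rw [zpow_one, update_eq_self]; exact .refl
    · simpa using NielsenEquiv.update_inv M (Fin.last m)
  exact hpow.trans
    (NielsenEquiv.update_mul_left_of_mem_closure (Subgroup.closure_mono hgen hu) _)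

end Minimal

lemma dist_zpow_smul_of_isometric {G X : Type*} [Group G] [MetricSpace X] [MulAction G X]
    {g : G} (hg : ∀ a b : X, dist (g • a) (g • b) = dist a b) (x : X) {e : ℤ}
    (he : e = 1 ∨ e = -1) : dist x ((g ^ e) • x) = dist x (g • x) := by
  rcases he with rfl | rfl
  · rw [zpow_one]
  · rw [zpow_neg_one, ← hg, smul_inv_smul, dist_comm]

theorem lemma19_part2_general
    (G : Type*) [Group G] (X : Type*) [MetricSpace X] [MulAction G X]
    (hgeo : GeodesicSpace X) (hhyp : DeltaHyperbolic X 1)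
    (hiso : ∀ (g : G) (a b : X), dist (g • a) (g • b) = dist a b)
    (x : X) (m : ℕ) (M : Fin (m + 1) → G) (hmin : MinimalTuple x M)
    (hord : ∀ i : Fin m, dist x (M i.castSucc • x) ≤ dist x (M (Fin.last m) • x))
    (d₂ : ℝ)
    (hH : ∀ h ∈ Subgroup.closure (Set.range fun i : Fin m => M i.castSucc),
      ∀ S : Set X, IsGeodesicSegment S x (h • x) → ∀ p ∈ S,
        ∃ h' ∈ Subgroup.closure (Set.range fun i : Fin m => M i.castSucc), ∃ i : Fin m,
          dist p (h' • x) ≤ dist x (M i.castSucc • x) / 2 + d₂)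
    (h : G) (hh : h ∈ Subgroup.closure (Set.range fun i : Fin m => M i.castSucc))
    (e : ℤ) (he : e = 1 ∨ e = -1) :
    ∃ (r : X) (s₁ s₂ : Set X),
      IsGeodesicSegment s₁ x r ∧
      IsGeodesicSegment s₂ r ((h * M (Fin.last m) ^ e) • x) ∧
      dist x r + dist r ((h * M (Fin.last m) ^ e) • x) ≤
        dist x ((h * M (Fin.last m) ^ e) • x) + 2 ∧
      (∀ S : Set X, IsGeodesicSegment S x ((h * M (Fin.last m) ^ e) • x) →
        InNbhd (s₁ ∪ s₂) S 2) ∧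
      (∀ S : Set X, IsGeodesicSegment S x (h • x) → InNbhd s₁ S 2) ∧
      (∀ S : Set X, IsGeodesicSegment S (h • x) ((h * M (Fin.last m) ^ e) • x) →
        InNbhd s₂ S 2) ∧
      dist x (h • x) / 2 - 3 ≤ dist r x ∧
      dist x (M (Fin.last m) • x) / 2 - (3 + d₂) ≤
        dist r ((h * M (Fin.last m) ^ e) • x) := by
  set y := (h * M (Fin.last m) ^ e) • x with hy_def
  have hy : dist (h • x) y = dist x (M (Fin.last m) • x) := by
    rw [hy_def, mul_smul, hiso, dist_zpow_smul_of_isometric (hiso _) x he]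
  obtain ⟨S, hS⟩ := hgeo x (h • x)
  obtain ⟨r, hrS, hr_xy, hr_hy⟩ := hhyp.exists_mem_near_other_sides zero_le_one hS y
  obtain ⟨s₁, hs₁⟩ := hgeo x r
  obtain ⟨s₂, hs₂⟩ := hgeo r y
  have hs₂_near (T : Set X) (hT : IsGeodesicSegment T (h • x) y) : InNbhd s₂ T 2 := by
    obtain ⟨q, hq, hrq⟩ := hr_hy T hT
    exact (one_add_one_eq_two (R := ℝ)) ▸ hhyp.inNbhd_of_dist_le hgeo hs₂.symm hT.symm hq hrq
  refine ⟨r, s₁, s₂, hs₁, hs₂, ?_, fun S₀ hS₀ => ?_, fun S' hS' => ?_, hs₂_near, ?_, ?_⟩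
  · obtain ⟨S₀, hS₀⟩ := hgeo x y
    obtain ⟨q, hq, hrq⟩ := hr_xy S₀ hS₀
    linarith [hS₀.dist_add_dist_le_of_dist_le hq hrq]
  · obtain ⟨q, hq, hrq⟩ := hr_xy S₀ hS₀
    exact (one_add_one_eq_two (R := ℝ)) ▸ (hhyp.inNbhd_of_dist_le hgeo hs₁ hS₀ hq hrq).union
      (hhyp.inNbhd_of_dist_le hgeo hs₂.symm hS₀.symm hq hrq)
  · obtain ⟨q, hq, hrq⟩ := hhyp.inNbhd_of_same_endpoints hS hS' r hrS
    exact (one_add_one_eq_two (R := ℝ)) ▸ hhyp.inNbhd_of_dist_le hgeo hs₁ hS' hq hrq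
  · obtain ⟨T, hT⟩ := hgeo (h • x) y
    obtain ⟨q, hq, hrq⟩ := hr_hy T hT
    linarith [hmin.dist_last_le hh he, hT.dist_add_dist_eq hq, dist_triangle x q (h • x),
      dist_triangle x q y, dist_triangle x r q, dist_comm r x, dist_comm q (h • x)]
  · obtain ⟨h', hh', i, hri⟩ := hH h hh S hS r hrS
    have hy' : dist x (h'⁻¹ • y) = dist (h' • x) y := by rw [← hiso h', smul_inv_smul]
    have hmin' := hmin.dist_last_le (mul_mem (inv_mem hh') hh) he
    rw [mul_assoc, mul_smul, hy'] at hmin'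
    linarith [hord i, dist_triangle (h' • x) r y, dist_comm r (h' • x)]

/-- **Lemma 19(2).** Let `M = (g₁, …, gₙ)` (here `n = m+1`) be a minimal tuple of
isometries of a `1`-hyperbolic geodesic space with base point `x`, with
`|gᵢ|_x ≤ |gₙ|_x` for `i ≤ n-1`, let `H = ⟨g₁, …, g_{n-1}⟩` and suppose `d₂ ≥ 0` is
such that every geodesic `[x, hx]`, `h ∈ H`, lies in the
`max_{i<n} (|gᵢ|_x/2 + d₂)`-neighborhood of the orbit `Hx`. Then for every `h ∈ H` and
`ε ∈ {-1,1}` there are a point `r` and geodesic segments `s₁ = [x,r]`,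
`s₂ = [r, hgₙ^ε x]` such that `s₁ ∪ s₂` has length at most `|hgₙ^ε|_x + 2` and lies in
the `2`-neighborhood of any geodesic `[x, hgₙ^ε x]`, `s₁` lies in the `2`-neighborhood
of any `[x, hx]`, `s₂` lies in the `2`-neighborhood of any `h[x, gₙ^ε x]`, and
`d(r, x) ≥ |h|_x/2 - 3`, `d(r, hgₙ^ε x) ≥ |gₙ|_x/2 - (3 + d₂)`. -/
theorem lemma19_part2
    (G : Type*) [Group G] (X : Type*) [MetricSpace X] [MulAction G X]
    (hgeo : GeodesicSpace X) (hhyp : DeltaHyperbolic X 1)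
    (hiso : ∀ (g : G) (a b : X), dist (g • a) (g • b) = dist a b)
    (x : X) (m : ℕ) (M : Fin (m + 1) → G) (hmin : MinimalTuple x M)
    (hord : ∀ i : Fin m, dist x (M i.castSucc • x) ≤ dist x (M (Fin.last m) • x))
    (d₂ : ℝ) (hd₂ : 0 ≤ d₂)
    (hH : ∀ h ∈ Subgroup.closure (Set.range fun i : Fin m => M i.castSucc),
      ∀ S : Set X, IsGeodesicSegment S x (h • x) → ∀ p ∈ S,
        ∃ h' ∈ Subgroup.closure (Set.range fun i : Fin m => M i.castSucc), ∃ i : Fin m,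
          dist p (h' • x) ≤ dist x (M i.castSucc • x) / 2 + d₂)
    (h : G) (hh : h ∈ Subgroup.closure (Set.range fun i : Fin m => M i.castSucc))
    (e : ℤ) (he : e = 1 ∨ e = -1) :
    ∃ (r : X) (s₁ s₂ : Set X),
      IsGeodesicSegment s₁ x r ∧
      IsGeodesicSegment s₂ r ((h * M (Fin.last m) ^ e) • x) ∧
      dist x r + dist r ((h * M (Fin.last m) ^ e) • x) ≤
        dist x ((h * M (Fin.last m) ^ e) • x) + 2 ∧
      (∀ S : Set X, IsGeodesicSegment S x ((h * M (Fin.last m) ^ e) • x) →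
        InNbhd (s₁ ∪ s₂) S 2) ∧
      (∀ S : Set X, IsGeodesicSegment S x (h • x) → InNbhd s₁ S 2) ∧
      (∀ S : Set X, IsGeodesicSegment S (h • x) ((h * M (Fin.last m) ^ e) • x) →
        InNbhd s₂ S 2) ∧
      dist x (h • x) / 2 - 3 ≤ dist r x ∧
      dist x (M (Fin.last m) • x) / 2 - (3 + d₂) ≤
        dist r ((h * M (Fin.last m) ^ e) • x) :=
  lemma19_part2_general G X hgeo hhyp hiso x m M hmin hord d₂ hH h hh e he
end

section
/- Let G be a group acting by isometries on a geodesic metric space (X,d), let g ∈ G, and let z ∈ X be a point with d(z, gz) ≤ ‖g‖ + 1 and N := d(z, gz) > 0. Fix a geodesic segment [z, gz]. Then the biinfinite concatenated path σ = ⋯ ∪ g⁻¹[z, gz] ∪ [z, gz] ∪ g[z, gz] ∪ g²[z, gz] ∪ ⋯, with its natural parameterization, is an N-local (1,2)-quasigeodesic. -/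
/-!
On each block `[iN, (i+1)N]` the path is an isometric copy of `[z, gz]`, so it is
`1`-Lipschitz everywhere, and `σ(u + N) = g σ(u)`. Since `z` almost realises the translation
length, every point is moved at least `N - 1` by `g`; hence for `s ≤ t ≤ s + N` the triangle
inequality through `σ(s + N)` gives
`N - 1 ≤ d(σ s, σ(s + N)) ≤ d(σ s, σ t) + (s + N - t)`, i.e. `t - s ≤ d(σ s, σ t) + 1`.
-/

set_option linter.unusedVariables false

open Set NNReal

section Lipschitz

variable {X : Type*} [PseudoMetricSpace X] {f : ℝ → X} {K : ℝ≥0}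

theorem LipschitzOnWith.Icc_union_Icc {a b c : ℝ} (hab : LipschitzOnWith K f (Icc a b))
    (hbc : LipschitzOnWith K f (Icc b c)) : LipschitzOnWith K f (Icc a c) := by
  refine LipschitzOnWith.of_dist_le_mul fun x hx y hy => ?_
  wlog hxy : x ≤ y generalizing x y
  · rw [dist_comm, dist_comm x]
    exact this y hy x hx (le_of_not_ge hxy)
  obtain ⟨hax, hxc⟩ := hx
  obtain ⟨hay, hyc⟩ := hy
  rcases le_total y b with hyb | hby
  · exact hab.dist_le_mul _ ⟨hax, hxy.trans hyb⟩ _ ⟨hay, hyb⟩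
  rcases le_total b x with hbx | hxb
  · exact hbc.dist_le_mul _ ⟨hbx, hxc⟩ _ ⟨hbx.trans hxy, hyc⟩
  calc dist (f x) (f y) ≤ dist (f x) (f b) + dist (f b) (f y) := dist_triangle _ _ _
    _ ≤ K * dist x b + K * dist b y :=
        add_le_add (hab.dist_le_mul _ ⟨hax, hxb⟩ _ ⟨hax.trans hxb, le_rfl⟩)
          (hbc.dist_le_mul _ ⟨le_rfl, hby.trans hyc⟩ _ ⟨hby, hyc⟩)
    _ = K * dist x y := by
        rw [Real.dist_eq, Real.dist_eq, Real.dist_eq, abs_of_nonpos (by linarith),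
          abs_of_nonpos (by linarith), abs_of_nonpos (by linarith)]
        ring

theorem LipschitzWith.of_lipschitzOnWith_Icc_intCast_mul {p : ℝ} (hp : 0 < p)
    (h : ∀ i : ℤ, LipschitzOnWith K f (Icc (i * p) ((i + 1) * p))) : LipschitzWith K f := by
  have hspan : ∀ n : ℕ, ∀ i : ℤ, LipschitzOnWith K f (Icc (i * p) ((i + n + 1) * p)) := by
    intro n
    induction n with
    | zero => simpa using h
    | succ n ih =>
      intro i
      have hnext := h (i + n + 1)
      push_cast at hnext ⊢
      simpa [add_assoc] using (ih i).Icc_union_Icc hnext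
  refine LipschitzWith.of_dist_le_mul fun x y => ?_
  obtain ⟨n, hn⟩ := exists_nat_ge ((|x| + |y|) / p)
  have hxy : |x| + |y| ≤ n * p := (div_le_iff₀ hp).1 hn
  have hmem : ∀ w, |w| ≤ n * p →
      w ∈ Icc (((-n : ℤ) : ℝ) * p) ((((-n : ℤ) : ℝ) + (2 * n : ℕ) + 1) * p) := by
    intro w hw
    obtain ⟨h₁, h₂⟩ := abs_le.1 hw
    push_cast
    constructor <;> nlinarith
  exact (hspan (2 * n) (-n)).dist_le_mul _ (hmem x (by linarith [abs_nonneg y]))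
    _ (hmem y (by linarith [abs_nonneg x]))

theorem LipschitzWith.abs_sub_le_dist_add (hf : LipschitzWith 1 f) {T c : ℝ}
    (hT : ∀ u, T - c ≤ dist (f u) (f (u + T))) {s t : ℝ} (hst : |s - t| ≤ T) :
    |s - t| ≤ dist (f s) (f t) + c := by
  wlog hle : s ≤ t generalizing s t
  · rw [abs_sub_comm, dist_comm]
    exact this (by rwa [abs_sub_comm]) (le_of_not_ge hle)
  rw [abs_of_nonpos (sub_nonpos.2 hle)] at hst ⊢
  have hback : dist (f t) (f (s + T)) ≤ s + T - t := by
    simpa [Real.dist_eq, abs_of_nonpos (by linarith : t - (s + T) ≤ 0)] using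
      hf.dist_le_mul t (s + T)
  linarith [hT s, dist_triangle (f s) (f t) (f (s + T))]

end Lipschitz

theorem exists_int_sub_mul_mem_Icc {p : ℝ} (hp : 0 < p) (t : ℝ) :
    ∃ i : ℤ, t - i * p ∈ Icc 0 p := by
  obtain ⟨i, hi, -⟩ := existsUnique_sub_zsmul_mem_Ico hp t 0
  rw [zsmul_eq_mul, zero_add] at hi
  exact ⟨i, Ico_subset_Icc_self hi⟩

theorem dist_le_dist_smul_add_of_le_iInf {G X : Type*} [SMul G X] [PseudoMetricSpace X]
    {g : G} {z : X} {c : ℝ} (hz : dist z (g • z) ≤ (⨅ y : X, dist y (g • y)) + c) (y : X) :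
    dist z (g • z) ≤ dist y (g • y) + c :=
  hz.trans (add_le_add_left (ciInf_le ⟨0, by rintro _ ⟨w, rfl⟩; exact dist_nonneg⟩ y) c)

theorem map_add_eq_smul_of_eq_zpow_smul {G X : Type*} [Group G] [MulAction G X] {g : G} {N : ℝ}
    {γ α : ℝ → X} (hα : ∀ i : ℤ, ∀ s ∈ Icc (0 : ℝ) N, α (i * N + s) = g ^ i • γ s)
    (hN : 0 < N) (t : ℝ) : α (t + N) = g • α t := by
  obtain ⟨i, hi⟩ := exists_int_sub_mul_mem_Icc hN t
  have ht := hα i _ hi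
  have htN := hα (1 + i) _ hi
  rw [add_sub_cancel] at ht
  rw [show ((1 + i : ℤ) : ℝ) * N + (t - i * N) = t + N by push_cast; ring] at htN
  rw [ht, htN, zpow_one_add, mul_smul]

theorem lipschitzOnWith_Icc_intCast_mul_of_eq_zpow_smul {G X : Type*} [Group G]
    [PseudoMetricSpace X] [MulAction G X] {g : G} {N : ℝ} {γ α : ℝ → X}
    (hiso : ∀ (h : G) (a b : X), dist (h • a) (h • b) = dist a b)
    (hγ : ∀ s ∈ Icc (0 : ℝ) N, ∀ t ∈ Icc (0 : ℝ) N, dist (γ s) (γ t) = |s - t|)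
    (hα : ∀ i : ℤ, ∀ s ∈ Icc (0 : ℝ) N, α (i * N + s) = g ^ i • γ s) (i : ℤ) :
    LipschitzOnWith 1 α (Icc (i * N) ((i + 1) * N)) := by
  refine LipschitzOnWith.mk_one fun x hx y hy => ?_
  have hblock : ∀ w ∈ Icc (i * N : ℝ) ((i + 1) * N), w - i * N ∈ Icc 0 N := fun w hw =>
    ⟨by linarith [hw.1], by linarith [hw.2]⟩
  have hx' := hα i _ (hblock x hx)
  have hy' := hα i _ (hblock y hy)
  rw [add_sub_cancel] at hx' hy'
  rw [hx', hy', hiso, hγ _ (hblock x hx) _ (hblock y hy), sub_sub_sub_cancel_right, Real.dist_eq]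

theorem biinfinite_local_quasigeodesic_general
    (G : Type*) [Group G] (X : Type*) [MetricSpace X] [MulAction G X]
    (hiso : ∀ (g : G) (a b : X), dist (g • a) (g • b) = dist a b)
    (g : G) (z : X)
    (hz : dist z (g • z) ≤ (⨅ y : X, dist y (g • y)) + 1)
    (N : ℝ) (hN : N = dist z (g • z)) (hNpos : 0 < N)
    (γ : ℝ → X)
    (hγ : ∀ s ∈ Set.Icc (0 : ℝ) N, ∀ t ∈ Set.Icc (0 : ℝ) N, dist (γ s) (γ t) = |s - t|)
    (α : ℝ → X)
    (hα : ∀ i : ℤ, ∀ s ∈ Set.Icc (0 : ℝ) N, α (i * N + s) = g ^ i • γ s) :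
    IsLocalQuasigeodesicOn α Set.univ N 1 2 := by
  have hlip : LipschitzWith 1 α := LipschitzWith.of_lipschitzOnWith_Icc_intCast_mul hNpos
    (lipschitzOnWith_Icc_intCast_mul_of_eq_zpow_smul hiso hγ hα)
  have hdisp : ∀ u, N - 1 ≤ dist (α u) (α (u + N)) := fun u => by
    have hmin := dist_le_dist_smul_add_of_le_iInf hz (α u)
    rw [← hN] at hmin
    rw [map_add_eq_smul_of_eq_zpow_smul hα hNpos u]
    linarith
  refine ⟨fun s _ t _ => ?_, fun s _ t _ hst => ?_⟩
  · simpa [Real.dist_eq] using hlip.dist_le_mul s t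
  · linarith [hlip.abs_sub_le_dist_add hdisp hst]

/-- Let `g` act by isometries on a geodesic metric space `X`, let `z` be a point with
`d(z, gz) ≤ ‖g‖ + 1` and `N = d(z, gz) > 0`, and fix a geodesic `[z, gz]`
(parameterized by `γ`). Then the biinfinite concatenated path
`σ = ⋯ ∪ g⁻¹[z,gz] ∪ [z,gz] ∪ g[z,gz] ∪ ⋯`, naturally parameterized by
`α (i·N + s) = gⁱ • γ s` for `i ∈ ℤ`, `s ∈ [0,N]`, is an `N`-local
`(1,2)`-quasigeodesic. -/
theorem biinfinite_local_quasigeodesic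
    (G : Type*) [Group G] (X : Type*) [MetricSpace X] [MulAction G X]
    (hgeo : GeodesicSpace X)
    (hiso : ∀ (g : G) (a b : X), dist (g • a) (g • b) = dist a b)
    (g : G) (z : X)
    (hz : dist z (g • z) ≤ (⨅ y : X, dist y (g • y)) + 1)
    (N : ℝ) (hN : N = dist z (g • z)) (hNpos : 0 < N)
    (γ : ℝ → X) (hγ0 : γ 0 = z) (hγN : γ N = g • z)
    (hγ : ∀ s ∈ Set.Icc (0 : ℝ) N, ∀ t ∈ Set.Icc (0 : ℝ) N, dist (γ s) (γ t) = |s - t|)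
    (α : ℝ → X)
    (hα : ∀ i : ℤ, ∀ s ∈ Set.Icc (0 : ℝ) N, α (i * N + s) = g ^ i • γ s) :
    IsLocalQuasigeodesicOn α Set.univ N 1 2 :=
  biinfinite_local_quasigeodesic_general G X hiso g z hz N hN hNpos γ hγ α hα
end
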